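/- arXiv:0905.3802 — 4 statements merged into one kernel-verified Lean document; each statement's English description precedes it below -/
import Mathlib

section
/- If E is an elementary set for a disjunctive program P, then the subgraph of the positive dependency graph of P induced by E is strongly connected (i.e., for all atoms m, n in E, n is reachable from m via directed edges within E). -/
structure Rule (α : Type) where
  B : Finset α
  F : Finset α
  H : Finset α

variable {α : Type}

/-- Z is outbound in Y for program P. -/
def Outbound [DecidableEq α] (P : Set (Rule α)) (Y Z : Finset α) : Prop :=
  ∃ r ∈ P, (r.H ∩ Z).Nonempty ∧ (r.B ∩ (Y \ Z)).Nonempty ∧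
    r.B ∩ Z = ∅ ∧ r.H ∩ (Y \ Z) = ∅

/-- Y is an elementary set for P. -/
def Elementary [DecidableEq α] (P : Set (Rule α)) (Y : Finset α) : Prop :=
  Y.Nonempty ∧ ∀ Z : Finset α, Z ⊂ Y → Z.Nonempty → Outbound P Y Z

/-- X is a disjunctive set for P. -/
def DisjSet [DecidableEq α] (P : Set (Rule α)) (X : Finset α) : Prop :=
  ∃ r ∈ P, 1 < (r.H ∩ X).card

/-- The projection P_X of P on a set X of atoms. -/
def proj [DecidableEq α] (P : Set (Rule α)) (X : Finset α) : Set (Rule α) :=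
  {r' | ∃ r ∈ P, (r.B ∩ X).Nonempty ∧ (r.H ∩ X).Nonempty ∧
        r' = ⟨r.B ∩ X, ∅, r.H ∩ X⟩}

/-- P is head-elementary-set-free. -/
def HEF [DecidableEq α] (P : Set (Rule α)) : Prop :=
  ∀ r ∈ P, ∀ E : Finset α, Elementary P E → (E ∩ r.H).card ≤ 1

theorem Finset.reflTransGen_of_forall_ssubset_exists_edge_into {β : Type*} [DecidableEq β]
    (R : β → β → Prop) (E : Finset β)
    (hE : ∀ Z ⊂ E, Z.Nonempty → ∃ b ∈ E \ Z, ∃ c ∈ Z, R b c) :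
    ∀ m ∈ E, ∀ n ∈ E, Relation.ReflTransGen (fun x y => x ∈ E ∧ y ∈ E ∧ R x y) m n := by
  classical
  intro m hm n hn
  -- The elements of `E` reaching `n` form a subset with no edge into it from the rest of `E`.
  set Z := {x ∈ E | Relation.ReflTransGen (fun x y => x ∈ E ∧ y ∈ E ∧ R x y) x n}
  have hZE : Z = E := by
    by_contra hne
    have hnZ : n ∈ Z := Finset.mem_filter.2 ⟨hn, .refl⟩
    obtain ⟨b, hb, c, hcZ, hbc⟩ :=
      hE Z (Finset.ssubset_iff_subset_ne.2 ⟨Finset.filter_subset _ _, hne⟩) ⟨n, hnZ⟩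
    obtain ⟨hbE, hbZ⟩ := Finset.mem_sdiff.1 hb
    obtain ⟨hcE, hcn⟩ := Finset.mem_filter.1 hcZ
    exact hbZ (Finset.mem_filter.2 ⟨hbE, .head ⟨hbE, hcE, hbc⟩ hcn⟩)
  rw [← hZE] at hm
  exact (Finset.mem_filter.1 hm).2

theorem Outbound.exists_edge_into [DecidableEq α] {P : Set (Rule α)} {Y Z : Finset α}
    (h : Outbound P Y Z) : ∃ b ∈ Y \ Z, ∃ c ∈ Z, ∃ r ∈ P, b ∈ r.B ∧ c ∈ r.H := by
  obtain ⟨r, hr, ⟨c, hc⟩, ⟨b, hb⟩, -, -⟩ := h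
  exact ⟨b, (Finset.mem_inter.1 hb).2, c, (Finset.mem_inter.1 hc).2, r, hr,
    (Finset.mem_inter.1 hb).1, (Finset.mem_inter.1 hc).1⟩

theorem stmt0_general {α : Type} [DecidableEq α] (P : Set (Rule α))
    (E : Finset α) (hE : Elementary P E) :
    ∀ m ∈ E, ∀ n ∈ E,
      Relation.ReflTransGen
        (fun x y => x ∈ E ∧ y ∈ E ∧ ∃ r ∈ P, x ∈ r.B ∧ y ∈ r.H) m n :=
  Finset.reflTransGen_of_forall_ssubset_exists_edge_into _ E fun Z hZ hne =>
    (hE.2 Z hZ hne).exists_edge_into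

/-- The subgraph of the positive dependency graph induced by an elementary set
is strongly connected. -/
theorem stmt0 {α : Type} [DecidableEq α] (P : Set (Rule α)) (hfin : P.Finite)
    (E : Finset α) (hE : Elementary P E) :
    ∀ m ∈ E, ∀ n ∈ E,
      Relation.ReflTransGen
        (fun x y => x ∈ E ∧ y ∈ E ∧ ∃ r ∈ P, x ∈ r.B ∧ y ∈ r.H) m n :=
  stmt0_general P E hE
end

section
/- For any disjunctive program P and any set E of atoms, E is an elementary set for P if and only if E is an elementary set for the projected program P_E. -/
variable {α : Type}

section

variable [DecidableEq α] {P : Set (Rule α)} {Y Z : Finset α}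

theorem Finset.inter_inter_eq_inter_of_subset {s t u : Finset α} (h : u ⊆ t) :
    s ∩ t ∩ u = s ∩ u := by
  rw [Finset.inter_assoc, Finset.inter_eq_right.mpr h]

/-- Intersecting a rule with `Y` changes none of the four sets that decide whether a subset `Z`
of `Y` is outbound, and the rule survives the projection because two of them are nonempty. -/
theorem outbound_proj_iff (hZ : Z ⊆ Y) : Outbound (proj P Y) Y Z ↔ Outbound P Y Z := by
  have hYZ : Y \ Z ⊆ Y := Finset.sdiff_subset
  constructor
  · rintro ⟨_, ⟨r, hr, -, -, rfl⟩, hHZ, hBYZ, hBZ, hHYZ⟩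
    simp only [Finset.inter_inter_eq_inter_of_subset hZ,
      Finset.inter_inter_eq_inter_of_subset hYZ] at hHZ hBYZ hBZ hHYZ
    exact ⟨r, hr, hHZ, hBYZ, hBZ, hHYZ⟩
  · rintro ⟨r, hr, hHZ, hBYZ, hBZ, hHYZ⟩
    refine ⟨_, ⟨r, hr, hBYZ.mono (Finset.inter_subset_inter_left hYZ),
      hHZ.mono (Finset.inter_subset_inter_left hZ), rfl⟩, ?_⟩
    simp only [Finset.inter_inter_eq_inter_of_subset hZ,
      Finset.inter_inter_eq_inter_of_subset hYZ]
    exact ⟨hHZ, hBYZ, hBZ, hHYZ⟩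

theorem elementary_congr {Q : Set (Rule α)}
    (h : ∀ Z ⊆ Y, Outbound P Y Z ↔ Outbound Q Y Z) : Elementary P Y ↔ Elementary Q Y :=
  and_congr_right fun _ ↦ forall₂_congr fun Z hZ ↦ imp_congr_right fun _ ↦ h Z hZ.subset

end

theorem stmt3_general {α : Type} [DecidableEq α] (P : Set (Rule α))
    (E : Finset α) :
    Elementary P E ↔ Elementary (proj P E) E :=
  elementary_congr fun _ hZ ↦ (outbound_proj_iff hZ).symm

theorem stmt3 {α : Type} [DecidableEq α] (P : Set (Rule α)) (hfin : P.Finite)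
    (E : Finset α) :
    Elementary P E ↔ Elementary (proj P E) E :=
  stmt3_general P E
end

section
/- A disjunctive program P is not HEF if and only if there exists a set E of atoms such that E is a disjunctive set for P (some rule of P has two or more head atoms in E) and there exists a non-disjunctive program P_red ⊆ P_E (every rule of P_red has a head of cardinality at most one) such that E is elementary for P_red. -/
variable {α : Type}

/-!
If E is elementary and disjunctive for P, take such an E that is minimal under inclusion.
Were E not elementary for the non-disjunctive part Q of the projection P_E, a minimal nonempty
Z ⊂ E that is not outbound in E for Q would again be elementary for P (a rule of Q making a
W ⊂ Z outbound in E makes W outbound in Z or Z outbound in E), and disjunctive (the rule of P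
making Z outbound in E has no head atom in E \ Z, so its head meets Z twice, or else it would
project into Q), contradicting minimality. Conversely, outboundness for a subset of P_E lifts to P,
because projecting on E does not change how a rule meets subsets of E.
-/

section

variable [DecidableEq α] {P Q : Set (Rule α)} {E W X Y Z : Finset α}

namespace Rule

def restrict (r : Rule α) (X : Finset α) : Rule α := ⟨r.B ∩ X, ∅, r.H ∩ X⟩

def IsOutboundWitness (r : Rule α) (Y Z : Finset α) : Prop :=
  (r.H ∩ Z).Nonempty ∧ (r.B ∩ (Y \ Z)).Nonempty ∧ r.B ∩ Z = ∅ ∧ r.H ∩ (Y \ Z) = ∅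

theorem isOutboundWitness_restrict_iff {r : Rule α} (hZY : Z ⊆ Y) (hYX : Y ⊆ X) :
    (r.restrict X).IsOutboundWitness Y Z ↔ r.IsOutboundWitness Y Z := by
  have hZX : Z ⊆ X := hZY.trans hYX
  have hYZX : Y \ Z ⊆ X := Finset.sdiff_subset.trans hYX
  simp only [IsOutboundWitness, restrict, Finset.inter_assoc, Finset.inter_eq_right.mpr hZX,
    Finset.inter_eq_right.mpr hYZX]

theorem IsOutboundWitness.inner_or_outer {r : Rule α} (hWZ : W ⊆ Z) (hZY : Z ⊆ Y)
    (h : r.IsOutboundWitness Y W) : r.IsOutboundWitness Z W ∨ r.IsOutboundWitness Y Z := by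
  obtain ⟨hHW, hBYW, hBW, hHYW⟩ := h
  have hHZW : r.H ∩ (Z \ W) = ∅ := Finset.subset_empty.mp <|
    hHYW ▸ Finset.inter_subset_inter_left (Finset.sdiff_subset_sdiff hZY le_rfl)
  rcases (r.B ∩ (Z \ W)).eq_empty_or_nonempty with hBZW | hBZW
  · -- the body meets Y \ W but avoids Z, so it meets Y \ Z
    right
    simp only [IsOutboundWitness, Finset.eq_empty_iff_forall_notMem, Finset.Nonempty,
      Finset.mem_inter, Finset.mem_sdiff] at hHW hBYW hBW hHYW hBZW ⊢
    grind
  · exact Or.inl ⟨hHW, hBZW, hBW, hHZW⟩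

end Rule

theorem mem_proj {r' : Rule α} :
    r' ∈ proj P X ↔
      ∃ r ∈ P, (r.B ∩ X).Nonempty ∧ (r.H ∩ X).Nonempty ∧ r' = r.restrict X :=
  Iff.rfl

theorem Outbound.inner_or_outer (hWZ : W ⊆ Z) (hZY : Z ⊆ Y) (h : Outbound Q Y W) :
    Outbound Q Z W ∨ Outbound Q Y Z := by
  obtain ⟨r, hr, hw : r.IsOutboundWitness Y W⟩ := h
  exact (hw.inner_or_outer hWZ hZY).imp (⟨r, hr, ·⟩) (⟨r, hr, ·⟩)

theorem Outbound.of_subset_proj (hQ : Q ⊆ proj P X) (hZY : Z ⊆ Y) (hYX : Y ⊆ X)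
    (h : Outbound Q Y Z) : Outbound P Y Z := by
  obtain ⟨r', hr', hw⟩ := h
  obtain ⟨r, hr, -, -, rfl⟩ := mem_proj.mp (hQ hr')
  exact ⟨r, hr, (Rule.isOutboundWitness_restrict_iff hZY hYX).mp hw⟩

theorem Elementary.of_subset_proj (hQ : Q ⊆ proj P X) (hYX : Y ⊆ X) (h : Elementary Q Y) :
    Elementary P Y :=
  ⟨h.1, fun Z hZY hZ => (h.2 Z hZY hZ).of_subset_proj hQ hZY.subset hYX⟩

theorem elementary_of_minimal_not_outbound
    (hZ : Minimal (fun Z => Z ⊂ Y ∧ Z.Nonempty ∧ ¬ Outbound Q Y Z) Z) : Elementary Q Z := by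
  obtain ⟨hZY, hZne, hZout⟩ := hZ.prop
  refine ⟨hZne, fun W hWZ hW => ?_⟩
  have hWout : Outbound Q Y W := by
    by_contra hWout
    exact hZ.not_lt ⟨hWZ.trans hZY, hW, hWout⟩ hWZ
  exact (hWout.inner_or_outer hWZ.subset hZY.subset).resolve_right hZout

def nondisjProj (P : Set (Rule α)) (X : Finset α) : Set (Rule α) :=
  {r | r ∈ proj P X ∧ r.H.card ≤ 1}

theorem nondisjProj_subset_proj : nondisjProj P X ⊆ proj P X := fun _ hr => hr.1

theorem disjSet_of_not_outbound_nondisjProj (hZY : Z ⊆ Y) (h : Outbound P Y Z)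
    (hnd : ¬ Outbound (nondisjProj P Y) Y Z) : DisjSet P Z := by
  obtain ⟨r, hr, hw : r.IsOutboundWitness Y Z⟩ := h
  have hHY : r.H ∩ Y = r.H ∩ Z := by
    have hHYZ := Finset.eq_empty_iff_forall_notMem.mp hw.2.2.2
    ext x
    simp only [Finset.mem_inter, Finset.mem_sdiff] at hHYZ ⊢
    grind
  refine ⟨r, hr, not_le.mp fun hcard => hnd ⟨r.restrict Y, ⟨?_, ?_⟩, ?_⟩⟩
  · exact ⟨r, hr, hw.2.1.mono (Finset.inter_subset_inter_left Finset.sdiff_subset),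
      hw.1.mono (Finset.inter_subset_inter_left hZY), rfl⟩
  · simpa only [Rule.restrict, hHY] using hcard
  · exact (Rule.isOutboundWitness_restrict_iff hZY subset_rfl).mpr hw

theorem exists_ssubset_elementary_disjSet (hE : Elementary P E)
    (hnd : ¬ Elementary (nondisjProj P E) E) : ∃ Z ⊂ E, Elementary P Z ∧ DisjSet P Z := by
  have hfail : ∃ Z, Z ⊂ E ∧ Z.Nonempty ∧ ¬ Outbound (nondisjProj P E) E Z := by
    by_contra! h
    exact hnd ⟨hE.1, h⟩
  obtain ⟨Z, hZ⟩ := exists_minimal_of_wellFoundedLT _ hfail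
  obtain ⟨hZE, hZne, hZout⟩ := hZ.prop
  exact ⟨Z, hZE,
    (elementary_of_minimal_not_outbound hZ).of_subset_proj nondisjProj_subset_proj hZE.subset,
    disjSet_of_not_outbound_nondisjProj hZE.subset (hE.2 Z hZE hZne) hZout⟩

theorem not_hef_iff_exists_elementary_disjSet :
    ¬ HEF P ↔ ∃ E, Elementary P E ∧ DisjSet P E := by
  simp only [HEF, not_forall, not_le, DisjSet, Finset.inter_comm _ (Rule.H _)]
  grind

end

theorem stmt5_general {α : Type} [DecidableEq α] (P : Set (Rule α)) :
    ¬ HEF P ↔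
      ∃ E : Finset α, DisjSet P E ∧
        ∃ Pred : Set (Rule α), Pred ⊆ proj P E ∧
          (∀ r ∈ Pred, r.H.card ≤ 1) ∧ Elementary Pred E := by
  rw [not_hef_iff_exists_elementary_disjSet]
  constructor
  · intro hex
    obtain ⟨E, hEmin⟩ := exists_minimal_of_wellFoundedLT _ hex
    refine ⟨E, hEmin.prop.2, nondisjProj P E, nondisjProj_subset_proj, fun r hr => hr.2, ?_⟩
    by_contra hnd
    obtain ⟨Z, hZE, hZ⟩ := exists_ssubset_elementary_disjSet hEmin.prop.1 hnd
    exact hEmin.not_lt hZ hZE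
  · rintro ⟨E, hdisj, Pred, hPred, -, hE⟩
    exact ⟨E, hE.of_subset_proj hPred subset_rfl, hdisj⟩

theorem stmt5 {α : Type} [DecidableEq α] (P : Set (Rule α)) (hfin : P.Finite) :
    ¬ HEF P ↔
      ∃ E : Finset α, DisjSet P E ∧
        ∃ Pred : Set (Rule α), Pred ⊆ proj P E ∧
          (∀ r ∈ Pred, r.H.card ≤ 1) ∧ Elementary Pred E :=
  stmt5_general P
end

section
/- Let P be a disjunctive program, E an elementary set for P, and P_red ⊆ P_E a witness of E containing a disjunctive rule δ* = (B*, H*) with |H*| > 1, such that E is not elementary for P_red \ {δ*}. Let S' be a minimal (with respect to inclusion) nonempty proper subset of E that is not outbound in E for P_red \ {δ*}. Then H* ⊆ S' and B* ⊆ E \ S'. -/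
variable {α : Type}

section

variable [DecidableEq α]

theorem Rule.body_subset_and_head_subset_of_mem_proj {P : Set (Rule α)} {X : Finset α}
    {r : Rule α} (hr : r ∈ proj P X) : r.B ⊆ X ∧ r.H ⊆ X := by
  obtain ⟨r₀, -, -, -, rfl⟩ := hr
  exact ⟨Finset.inter_subset_right, Finset.inter_subset_right⟩

theorem Outbound.singleton_of_not_outbound_diff {P : Set (Rule α)} {Y Z : Finset α}
    {δ : Rule α} (h : Outbound P Y Z) (hδ : ¬ Outbound (P \ {δ}) Y Z) :
    Outbound {δ} Y Z := by
  obtain ⟨r, hr, hout⟩ := h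
  obtain rfl : r = δ := by
    by_contra hne
    exact hδ ⟨r, ⟨hr, hne⟩, hout⟩
  exact ⟨r, rfl, hout⟩

theorem Outbound.head_subset_and_body_subset_sdiff_of_singleton {r : Rule α} {Y Z : Finset α}
    (h : Outbound {r} Y Z) (hB : r.B ⊆ Y) (hH : r.H ⊆ Y) (hZ : Z ⊆ Y) :
    r.H ⊆ Z ∧ r.B ⊆ Y \ Z := by
  obtain ⟨_, rfl, -, -, hBZ, hHYZ⟩ := h
  exact ⟨(disjoint_sdiff_iff_le hH hZ).1 (Finset.disjoint_iff_inter_eq_empty.2 hHYZ),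
    Finset.subset_sdiff.2 ⟨hB, Finset.disjoint_iff_inter_eq_empty.2 hBZ⟩⟩

end

theorem stmt6_general {α : Type} [DecidableEq α] (P Pred : Set (Rule α))
    (E : Finset α)
    (hPred : Pred ⊆ proj P E) (hwit : Elementary Pred E)
    (δ : Rule α) (hδ : δ ∈ Pred)
    (S' : Finset α) (hS'sub : S' ⊂ E) (hS'ne : S'.Nonempty)
    (hS'nout : ¬ Outbound (Pred \ {δ}) E S') :
    δ.H ⊆ S' ∧ δ.B ⊆ E \ S' := by
  obtain ⟨hB, hH⟩ := Rule.body_subset_and_head_subset_of_mem_proj (hPred hδ)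
  have hδout : Outbound {δ} E S' :=
    (hwit.2 S' hS'sub hS'ne).singleton_of_not_outbound_diff hS'nout
  exact hδout.head_subset_and_body_subset_sdiff_of_singleton hB hH hS'sub.subset

theorem stmt6 {α : Type} [DecidableEq α] (P Pred : Set (Rule α)) (hfin : P.Finite)
    (E : Finset α) (hE : Elementary P E)
    (hPred : Pred ⊆ proj P E) (hwit : Elementary Pred E)
    (δ : Rule α) (hδ : δ ∈ Pred) (hδdisj : 1 < δ.H.card)
    (hnotel : ¬ Elementary (Pred \ {δ}) E)
    (S' : Finset α) (hS'sub : S' ⊂ E) (hS'ne : S'.Nonempty)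
    (hS'nout : ¬ Outbound (Pred \ {δ}) E S')
    (hS'min : ∀ T : Finset α, T ⊂ S' → T.Nonempty → Outbound (Pred \ {δ}) E T) :
    δ.H ⊆ S' ∧ δ.B ⊆ E \ S' :=
  stmt6_general P Pred E hPred hwit δ hδ S' hS'sub hS'ne hS'nout
end
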